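/- arXiv:0810.1670 — 4 statements merged into one kernel-verified Lean document; each statement's English description precedes it below -/
import Mathlib

section
/- For a flow φ on a metric space X, if p is chain recurrent (for every continuous ε : X → (0,∞) and T > 0 there is an (ε,T)-chain from p to p), then for every s ≥ 0 the point φ(s,p) is chain reachable from p: for every continuous ε : X → (0,∞) and every T > 0 there exists an (ε,T)-chain from p to φ(s,p). -/
/-- An `(ε,T)`-chain for the flow `φ` from `p` to `q`: a finite sequence
`x 0 = p, …, x n = q` (with `n ≥ 1`) and times `t i ≥ T` such that
`dist (φ (t i) (x i)) (x (i+1)) < ε (φ (t i) (x i))` for all `i < n`. -/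
def EpsChain {X : Type*} [MetricSpace X] (φ : ℝ → X → X) (ε : X → ℝ) (T : ℝ)
    (p q : X) : Prop :=
  ∃ (n : ℕ) (x : ℕ → X) (t : ℕ → ℝ), 1 ≤ n ∧ x 0 = p ∧ x n = q ∧
    (∀ i < n, T ≤ t i) ∧
    ∀ i < n, dist (φ (t i) (x i)) (x (i + 1)) < ε (φ (t i) (x i))

/-! Take an `(ε',T)`-chain from `p` to `p` with `ε' ≤ ε` so small that landing
`ε'`-close to `p` forces the time-`s` image to land `ε`-close to `φ s p`. Lengthening the
last time of the chain by `s` then turns it into an `(ε,T)`-chain from `p` to `φ s p`. -/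

open Topology Relation

theorem Metric.exists_pos_forall_dist_apply_lt {X Y : Type*} [PseudoMetricSpace X]
    [PseudoMetricSpace Y] {f : X → Y} {ε : Y → ℝ} {p : X} (hf : ContinuousAt f p)
    (hε : ContinuousAt ε (f p)) (hpos : 0 < ε (f p)) :
    ∃ δ > 0, ∀ z, dist z p < δ → dist (f z) (f p) < ε (f z) := by
  have hnear : ∀ᶠ z in 𝓝 p, dist (f z) (f p) < ε (f z) :=
    (hf.dist continuousAt_const).eventually_lt (hε.comp hf) (by simpa using hpos)
  obtain ⟨δ, hδ, hball⟩ := Metric.eventually_nhds_iff.mp hnear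
  exact ⟨δ, hδ, fun z hz => hball hz⟩

namespace EpsChain

variable {X : Type*} [MetricSpace X] {φ : ℝ → X → X} {ε ε' : X → ℝ} {T : ℝ} {p q : X}

theorem mono (hε : ∀ x, ε x ≤ ε' x) (h : EpsChain φ ε T p q) : EpsChain φ ε' T p q := by
  obtain ⟨n, x, t, hn, hx0, hxn, ht, hstep⟩ := h
  exact ⟨n, x, t, hn, hx0, hxn, ht, fun i hi => (hstep i hi).trans_le (hε _)⟩

theorem exists_last_step (h : EpsChain φ ε T p q) :
    ∃ y t, ReflGen (EpsChain φ ε T) p y ∧ T ≤ t ∧ dist (φ t y) q < ε (φ t y) := by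
  obtain ⟨n, x, t, hn, hx0, hxn, ht, hstep⟩ := h
  obtain ⟨m, rfl⟩ : ∃ m, n = m + 1 := ⟨n - 1, by omega⟩
  refine ⟨x m, t m, ?_, ht m (by omega), hxn ▸ hstep m (by omega)⟩
  rcases Nat.eq_zero_or_pos m with rfl | hm
  · exact hx0 ▸ ReflGen.refl
  · exact ReflGen.single ⟨m, x, t, hm, hx0, rfl, fun i hi => ht i (by omega),
      fun i hi => hstep i (by omega)⟩

theorem snoc {y : X} {τ : ℝ} (hpre : ReflGen (EpsChain φ ε T) p y) (hτ : T ≤ τ)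
    (hlast : dist (φ τ y) q < ε (φ τ y)) : EpsChain φ ε T p q := by
  cases hpre with
  | refl =>
    refine ⟨1, fun i => if i = 0 then p else q, fun _ => τ, le_rfl, rfl, rfl,
      fun _ _ => hτ, fun i hi => ?_⟩
    obtain rfl : i = 0 := by omega
    simpa using hlast
  | single h =>
    obtain ⟨n, x, t, hn, hx0, hxn, ht, hstep⟩ := h
    refine ⟨n + 1, fun i => if i ≤ n then x i else q, fun i => if i < n then t i else τ,
      by omega, by simpa using hx0, by simp, fun i hi => ?_, fun i hi => ?_⟩
    · dsimp only
      split_ifs with hin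
      exacts [ht i hin, hτ]
    · rcases Nat.lt_or_ge i n with hin | hin
      · simpa [hin, hin.le, Nat.succ_le_of_lt hin] using hstep i hin
      · obtain rfl : i = n := by omega
        simpa [hxn] using hlast

end EpsChain

theorem chain_reachable_of_chain_recurrent_general
    {X : Type*} [MetricSpace X] (φ : ℝ → X → X)
    (hφadd : ∀ t s x, φ (t + s) x = φ t (φ s x))
    (hφcont : Continuous fun q : ℝ × X => φ q.1 q.2)
    (p : X)
    (hrec : ∀ ε : X → ℝ, Continuous ε → (∀ x, 0 < ε x) →
      ∀ T : ℝ, 0 < T → EpsChain φ ε T p p) :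
    ∀ s : ℝ, 0 ≤ s →
      ∀ ε : X → ℝ, Continuous ε → (∀ x, 0 < ε x) →
        ∀ T : ℝ, 0 < T → EpsChain φ ε T p (φ s p) := by
  intro s hs ε hεc hεpos T hT
  have hφs : Continuous (φ s) := hφcont.comp (Continuous.prodMk_right s)
  obtain ⟨δ, hδ, hflow⟩ := Metric.exists_pos_forall_dist_apply_lt hφs.continuousAt
    hεc.continuousAt (hεpos (φ s p))
  obtain ⟨y, t, hpre, ht, hlast⟩ :=
    (hrec (fun x => min (ε x) δ) (hεc.min continuous_const)
      (fun x => lt_min (hεpos x) hδ) T hT).exists_last_step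
  refine EpsChain.snoc (τ := s + t) (hpre.mono fun a b => EpsChain.mono fun x => min_le_left _ _)
    (by linarith) ?_
  rw [hφadd]
  exact hflow _ (hlast.trans_le (min_le_right _ _))

theorem chain_reachable_of_chain_recurrent
    {X : Type*} [MetricSpace X] (φ : ℝ → X → X)
    (hφ0 : ∀ x, φ 0 x = x)
    (hφadd : ∀ t s x, φ (t + s) x = φ t (φ s x))
    (hφcont : Continuous fun q : ℝ × X => φ q.1 q.2)
    (p : X)
    (hrec : ∀ ε : X → ℝ, Continuous ε → (∀ x, 0 < ε x) →
      ∀ T : ℝ, 0 < T → EpsChain φ ε T p p) :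
    ∀ s : ℝ, 0 ≤ s →
      ∀ ε : X → ℝ, Continuous ε → (∀ x, 0 < ε x) →
        ∀ T : ℝ, 0 < T → EpsChain φ ε T p (φ s p) :=
  chain_reachable_of_chain_recurrent_general φ hφadd hφcont p hrec
end

section
/- Deterministic version of Lemma 3.3: Let φ be a flow on a metric space X and U an open 'pre-attractor', i.e. there is τ > 0 with Cl(⋃_{t ≥ τ} φ(t,U)) ⊆ U, and assume U is forward invariant (φ(t,U) ⊆ U for all t ≥ 0). Define the attractor A = ⋂_{n ∈ ℕ} Cl(⋃_{t ≥ nτ} φ(t,U)). If p ∈ U is chain recurrent for φ, then p ∈ A. -/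
open Metric Set

def IsChainRecurrent {X : Type*} [MetricSpace X] (φ : ℝ → X → X) (p : X) : Prop :=
  ∀ ε : X → ℝ, Continuous ε → (∀ x, 0 < ε x) → ∀ T : ℝ, 0 < T → EpsChain φ ε T p p

theorem exists_continuous_pos_ball_subset_of_isClosed_subset_isOpen {X : Type*}
    [PseudoMetricSpace X] {K U : Set X} (hK : IsClosed K) (hU : IsOpen U) (hKU : K ⊆ U)
    {δ : ℝ} (hδ : 0 < δ) :
    ∃ g : X → ℝ, Continuous g ∧ (∀ x, 0 < g x) ∧ ∀ y ∈ K, g y ≤ δ ∧ ball y (g y) ⊆ U := by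
  rcases K.eq_empty_or_nonempty with rfl | hKne
  · exact ⟨fun _ => δ, continuous_const, fun _ => hδ, by simp⟩
  rcases Uᶜ.eq_empty_or_nonempty with hUc | hUc
  · rw [compl_empty_iff] at hUc
    exact ⟨fun _ => δ, continuous_const, fun _ => hδ, fun _ _ => ⟨le_rfl, hUc ▸ subset_univ _⟩⟩
  refine ⟨fun x => min δ (infDist x Uᶜ + infDist x K),
    continuous_const.min (continuous_infDist_pt _ |>.add (continuous_infDist_pt _)), ?_, ?_⟩
  · intro x
    refine lt_min hδ ?_
    by_cases hx : x ∈ K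
    · have : 0 < infDist x Uᶜ :=
        (hU.isClosed_compl.notMem_iff_infDist_pos hUc).1 (not_not.2 (hKU hx))
      exact add_pos_of_pos_of_nonneg this infDist_nonneg
    · exact add_pos_of_nonneg_of_pos infDist_nonneg ((hK.notMem_iff_infDist_pos hKne).1 hx)
  · intro y hy
    refine ⟨min_le_left _ _, (ball_subset_ball ?_).trans ball_infDist_compl_subset⟩
    calc min δ (infDist y Uᶜ + infDist y K) ≤ infDist y Uᶜ + infDist y K := min_le_right _ _
      _ = infDist y Uᶜ := by rw [infDist_zero_of_mem hy, add_zero]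

theorem EpsChain.exists_last_step_s10 {X : Type*} [MetricSpace X] {φ : ℝ → X → X}
    {ε : X → ℝ} {T : ℝ} {p q : X} {U : Set X} (hchain : EpsChain φ ε T p q) (hp : p ∈ U)
    (hstep : ∀ x ∈ U, ∀ t, T ≤ t → ∀ z, dist (φ t x) z < ε (φ t x) → z ∈ U) :
    ∃ x ∈ U, ∃ t, T ≤ t ∧ dist (φ t x) q < ε (φ t x) := by
  obtain ⟨n, x, t, hn, rfl, rfl, hT, hdist⟩ := hchain
  have hmem : ∀ i ≤ n, x i ∈ U := by
    intro i
    induction i with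
    | zero => exact fun _ => hp
    | succ i ih => exact fun hi => hstep _ (ih (by omega)) _ (hT i hi) _ (hdist i hi)
  obtain ⟨m, rfl⟩ := Nat.exists_eq_add_of_le' hn
  exact ⟨x m, hmem m (by omega), t m, hT m (by omega), hdist m (by omega)⟩

theorem IsChainRecurrent.mem_closure_iUnion_image {X : Type*} [MetricSpace X]
    {φ : ℝ → X → X} {U : Set X} {τ : ℝ} {p : X} (hrec : IsChainRecurrent φ p)
    (hU : IsOpen U) (hpre : closure (⋃ (t : ℝ) (_ : τ ≤ t), φ t '' U) ⊆ U) (hp : p ∈ U)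
    (T₀ : ℝ) : p ∈ closure (⋃ (t : ℝ) (_ : T₀ ≤ t), φ t '' U) := by
  rw [Metric.mem_closure_iff]
  intro δ hδ
  set K := closure (⋃ (t : ℝ) (_ : τ ≤ t), φ t '' U)
  have hflowK : ∀ x ∈ U, ∀ t, τ ≤ t → φ t x ∈ K := fun x hx t ht =>
    subset_closure (mem_biUnion ht (mem_image_of_mem _ hx))
  obtain ⟨g, hg, hgpos, hgK⟩ :=
    exists_continuous_pos_ball_subset_of_isClosed_subset_isOpen isClosed_closure hU hpre hδ
  set T := max (max T₀ τ) 1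
  have hτT : τ ≤ T := (le_max_right _ _).trans (le_max_left _ _)
  obtain ⟨x, hx, t, hTt, hlast⟩ :=
    (hrec g hg hgpos T (lt_of_lt_of_le one_pos (le_max_right _ _))).exists_last_step_s10 hp
      fun x hx t ht z hz => (hgK _ (hflowK x hx t (hτT.trans ht))).2 (mem_ball'.2 hz)
  refine ⟨φ t x, mem_biUnion ((le_max_left _ _).trans ((le_max_left _ _).trans hTt))
    (mem_image_of_mem _ hx), ?_⟩
  rw [dist_comm]
  exact hlast.trans_le (hgK _ (hflowK x hx t (hτT.trans hTt))).1

theorem chain_recurrent_in_preattractor_mem_attractor_general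
    {X : Type*} [MetricSpace X] (φ : ℝ → X → X)
    (U : Set X) (hUopen : IsOpen U)
    (τ : ℝ)
    (hpre : closure (⋃ (t : ℝ) (_ : τ ≤ t), φ t '' U) ⊆ U)
    (p : X) (hpU : p ∈ U)
    (hrec : ∀ ε : X → ℝ, Continuous ε → (∀ x, 0 < ε x) →
      ∀ T : ℝ, 0 < T → EpsChain φ ε T p p) :
    p ∈ ⋂ n : ℕ, closure (⋃ (t : ℝ) (_ : (n : ℝ) * τ ≤ t), φ t '' U) :=
  mem_iInter.2 fun n =>
    IsChainRecurrent.mem_closure_iUnion_image hrec hUopen hpre hpU ((n : ℝ) * τ)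

theorem chain_recurrent_in_preattractor_mem_attractor
    {X : Type*} [MetricSpace X] (φ : ℝ → X → X)
    (hφ0 : ∀ x, φ 0 x = x)
    (hφadd : ∀ t s x, φ (t + s) x = φ t (φ s x))
    (hφcont : Continuous fun q : ℝ × X => φ q.1 q.2)
    (U : Set X) (hUopen : IsOpen U)
    (hfwd : ∀ t : ℝ, 0 ≤ t → φ t '' U ⊆ U)
    (τ : ℝ) (hτ : 0 < τ)
    (hpre : closure (⋃ (t : ℝ) (_ : τ ≤ t), φ t '' U) ⊆ U)
    (p : X) (hpU : p ∈ U)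
    (hrec : ∀ ε : X → ℝ, Continuous ε → (∀ x, 0 < ε x) →
      ∀ T : ℝ, 0 < T → EpsChain φ ε T p p) :
    p ∈ ⋂ n : ℕ, closure (⋃ (t : ℝ) (_ : (n : ℝ) * τ ≤ t), φ t '' U) :=
  chain_recurrent_in_preattractor_mem_attractor_general φ U hUopen τ hpre p hpU hrec
end

section
/- Deterministic version of Lemma 3.4: Let φ be a flow on metric space X, U an open forward-invariant pre-attractor (Cl(⋃_{t≥τ}φ(t,U)) ⊆ U for some τ > 0) with attractor A = ⋂_n Cl(⋃_{t≥nτ} φ(t,U)), and basin B(A,U) = {x : φ(t,x) ∈ U for some t ≥ 0}. If p ∈ B(A,U) is chain recurrent, then p ∈ A. -/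
open Set

def imageFrom {X : Type*} (φ : ℝ → X → X) (U : Set X) (a : ℝ) : Set X :=
  ⋃ (t : ℝ) (_ : a ≤ t), φ t '' U

section imageFrom

variable {X : Type*} {φ : ℝ → X → X} {U : Set X}

theorem mem_imageFrom {a t : ℝ} (ht : a ≤ t) {y : X} (hy : y ∈ U) : φ t y ∈ imageFrom φ U a :=
  mem_iUnion₂.2 ⟨t, ht, mem_image_of_mem _ hy⟩

theorem imageFrom_anti : Antitone (imageFrom φ U) := fun _ _ hab =>
  iUnion₂_subset fun t ht => subset_iUnion₂_of_subset t (hab.trans ht) subset_rfl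

end imageFrom

theorem EpsChain.exists_dist_lt_of_invariant {X : Type*} [MetricSpace X] {φ : ℝ → X → X}
    {ε : X → ℝ} {T : ℝ} {p q : X} (h : EpsChain φ ε T p q) {S : Set X}
    (hp : ∀ t, T ≤ t → φ t p ∈ S)
    (hS : ∀ z ∈ S, ∀ y, dist z y < ε z → ∀ t, T ≤ t → φ t y ∈ S) :
    ∃ z ∈ S, dist z q < ε z := by
  obtain ⟨m, x, t, hm, rfl, rfl, hT, hjump⟩ := h
  have hseg : ∀ i < m, φ (t i) (x i) ∈ S := by
    intro i
    induction i with
    | zero => exact fun h0 => hp _ (hT 0 h0)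
    | succ j ih =>
      intro hj
      exact hS _ (ih (by omega)) _ (hjump j (by omega)) _ (hT _ hj)
  have hlast : m - 1 < m := by omega
  refine ⟨_, hseg _ hlast, ?_⟩
  simpa only [Nat.sub_add_cancel hm] using hjump _ hlast

theorem chain_recurrent_in_basin_mem_attractor_general
    {X : Type*} [MetricSpace X] (φ : ℝ → X → X)
    (hφadd : ∀ t s x, φ (t + s) x = φ t (φ s x))
    (U : Set X) (hUopen : IsOpen U)
    (τ : ℝ) (hτ : 0 < τ)
    (hpre : closure (⋃ (t : ℝ) (_ : τ ≤ t), φ t '' U) ⊆ U)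
    (p : X) (hpB : ∃ t : ℝ, 0 ≤ t ∧ φ t p ∈ U)
    (hrec : ∀ ε : X → ℝ, Continuous ε → (∀ x, 0 < ε x) →
      ∀ T : ℝ, 0 < T → EpsChain φ ε T p p) :
    p ∈ ⋂ n : ℕ, closure (⋃ (t : ℝ) (_ : (n : ℝ) * τ ≤ t), φ t '' U) := by
  obtain ⟨t₀, ht₀, hp⟩ := hpB
  obtain ⟨ε₀, hε₀pos, hε₀⟩ := Metric.exists_continuous_real_forall_closedBall_subset
    (K := fun _ : Unit => closure (imageFrom φ U τ)) (U := fun _ => U)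
    (fun _ => isClosed_closure) (fun _ => hUopen) (fun _ => hpre) (locallyFinite_of_finite _)
  refine mem_iInter.2 fun n => Metric.mem_closure_iff.2 fun δ hδ => ?_
  have hnτ : (n : ℝ) * τ ≤ (n + 1) * τ := by nlinarith
  let ε x := min δ (ε₀ x)
  have hchain : EpsChain φ ε (t₀ + (n + 1) * τ) p p :=
    hrec ε (continuous_const.min ε₀.continuous) (fun x => lt_min hδ (hε₀pos x)) _
      (by positivity)
  obtain ⟨z, hz, hzp⟩ := hchain.exists_dist_lt_of_invariant (S := imageFrom φ U ((n + 1) * τ))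
    (fun t ht => by
      rw [← sub_add_cancel t t₀, hφadd]
      exact mem_imageFrom (by linarith) hp)
    (fun z hz y hzy t ht => by
      have hzK : z ∈ closure (imageFrom φ U τ) :=
        subset_closure (imageFrom_anti (by nlinarith) hz)
      have hy : y ∈ U :=
        hε₀ () z hzK (Metric.mem_closedBall'.2 ((hzy.trans_le (min_le_right _ _)).le))
      exact mem_imageFrom (by linarith) hy)
  exact ⟨z, imageFrom_anti hnτ hz, dist_comm p z ▸ hzp.trans_le (min_le_left _ _)⟩

theorem chain_recurrent_in_basin_mem_attractor
    {X : Type*} [MetricSpace X] (φ : ℝ → X → X)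
    (hφ0 : ∀ x, φ 0 x = x)
    (hφadd : ∀ t s x, φ (t + s) x = φ t (φ s x))
    (hφcont : Continuous fun q : ℝ × X => φ q.1 q.2)
    (U : Set X) (hUopen : IsOpen U)
    (hfwd : ∀ t : ℝ, 0 ≤ t → φ t '' U ⊆ U)
    (τ : ℝ) (hτ : 0 < τ)
    (hpre : closure (⋃ (t : ℝ) (_ : τ ≤ t), φ t '' U) ⊆ U)
    (p : X) (hpB : ∃ t : ℝ, 0 ≤ t ∧ φ t p ∈ U)
    (hrec : ∀ ε : X → ℝ, Continuous ε → (∀ x, 0 < ε x) →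
      ∀ T : ℝ, 0 < T → EpsChain φ ε T p p) :
    p ∈ ⋂ n : ℕ, closure (⋃ (t : ℝ) (_ : (n : ℝ) * τ ≤ t), φ t '' U) :=
  chain_recurrent_in_basin_mem_attractor_general φ hφadd U hUopen τ hτ hpre p hpB hrec
end

section
/- Chain-reachable set is a pre-attractor (deterministic version of the main construction): Let φ be a flow on a metric space X, x ∈ X, ε : X → (0,∞) continuous, τ > 0. Let U_x be the set of all endpoints of (ε,τ)-chains starting at x. Then U_x is open, and φ(t, U_x) ⊆ U_x for all t ≥ τ. Moreover, any point y with d(z', y) < δ(y) for some z' ∈ ⋃_{t≥τ} φ(t, U_x), where δ ≤ ε/2 is chosen so that d(y,w) < δ(y) implies ε(w) > ε(y)/2, is again in U_x; hence ⋃_{t ≥ τ} φ(t,U_x) has closure contained in U_x whenever every closure point is such a y. -/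
/-! Look at the last jump of a chain: a point reachable from `p` lies in an open ball
`ball (φ t z) (ε (φ t z))` with `t ≥ T` and `z` either `p` or reachable from `p`, and conversely
every such ball consists of reachable points. So the reachable set is a union of open balls,
it is invariant because `φ t z` is the centre of its own ball, and a point `δ`-close to some
`φ t z` lies in that ball because `δ y ≤ ε y / 2 < ε (φ t z)`. -/

namespace EpsChain

variable {X : Type*} [MetricSpace X] {φ : ℝ → X → X} {ε : X → ℝ} {T : ℝ} {p q y z : X} {t : ℝ}

theorem single (ht : T ≤ t) (hd : dist (φ t p) q < ε (φ t p)) : EpsChain φ ε T p q :=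
  ⟨1, fun i => if i = 0 then p else q, fun _ => t, le_rfl, rfl, rfl,
    fun _ _ => ht, fun i hi => by
      obtain rfl : i = 0 := by omega
      simpa using hd⟩

theorem extend (h : EpsChain φ ε T p q) (ht : T ≤ t) (hd : dist (φ t q) y < ε (φ t q)) :
    EpsChain φ ε T p y := by
  obtain ⟨n, x, s, hn, h0, hq, hs, hjump⟩ := h
  refine ⟨n + 1, fun i => if i = n + 1 then y else x i, fun i => if i = n then t else s i,
    by omega, by simp [h0], by simp, fun i hi => ?_, fun i hi => ?_⟩
  all_goals rcases (by omega : i = n ∨ i < n) with rfl | hi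
  · simp [ht]
  · simp [hi.ne, hs i hi]
  · simpa [hq] using hd
  · have h₁ : i ≠ n + 1 := by omega
    have h₂ : i + 1 ≠ n + 1 := by omega
    simpa [hi.ne, h₁, h₂] using hjump i hi

theorem exists_last_jump (h : EpsChain φ ε T p q) :
    ∃ z t, (z = p ∨ EpsChain φ ε T p z) ∧ T ≤ t ∧ dist (φ t z) q < ε (φ t z) := by
  obtain ⟨_ | m, x, s, hn, h0, hq, hs, hjump⟩ := h
  · omega
  refine ⟨x m, s m, ?_, hs m m.lt_succ_self, hq ▸ hjump m m.lt_succ_self⟩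
  rcases Nat.eq_zero_or_pos m with rfl | hm
  · exact Or.inl h0
  · exact Or.inr ⟨m, x, s, hm, h0, rfl, fun i hi => hs i (by omega),
      fun i hi => hjump i (by omega)⟩

theorem of_mem_ball (hz : z = p ∨ EpsChain φ ε T p z) (ht : T ≤ t)
    (hy : y ∈ Metric.ball (φ t z) (ε (φ t z))) : EpsChain φ ε T p y := by
  rw [Metric.mem_ball, dist_comm] at hy
  rcases hz with rfl | hz
  · exact single ht hy
  · exact hz.extend ht hy

end EpsChain

theorem isOpen_setOf_epsChain {X : Type*} [MetricSpace X] (φ : ℝ → X → X) (ε : X → ℝ)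
    (T : ℝ) (p : X) : IsOpen {y : X | EpsChain φ ε T p y} := by
  refine isOpen_iff_forall_mem_open.2 fun y hy => ?_
  obtain ⟨z, t, hz, ht, hd⟩ := EpsChain.exists_last_jump hy
  exact ⟨Metric.ball (φ t z) (ε (φ t z)), fun w hw => EpsChain.of_mem_ball hz ht hw,
    Metric.isOpen_ball, by rwa [Metric.mem_ball, dist_comm]⟩

theorem chain_reachable_set_is_preattractor_general
    {X : Type*} [MetricSpace X] (φ : ℝ → X → X)
    (ε : X → ℝ) (hεpos : ∀ x, 0 < ε x)
    (τ : ℝ) (x : X) :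
    IsOpen {y : X | EpsChain φ ε τ x y} ∧
    (∀ t : ℝ, τ ≤ t → φ t '' {y : X | EpsChain φ ε τ x y} ⊆ {y : X | EpsChain φ ε τ x y}) ∧
    ∀ δ : X → ℝ, (∀ y, 0 < δ y) → (∀ y, δ y ≤ ε y / 2) →
      (∀ y w, dist y w < δ y → ε y / 2 < ε w) →
      (∀ y : X,
        (∃ z' ∈ ⋃ (t : ℝ) (_ : τ ≤ t), φ t '' {y : X | EpsChain φ ε τ x y},
          dist z' y < δ y) → y ∈ {y : X | EpsChain φ ε τ x y}) ∧
      ((∀ y ∈ closure (⋃ (t : ℝ) (_ : τ ≤ t), φ t '' {y : X | EpsChain φ ε τ x y}),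
          ∃ z' ∈ ⋃ (t : ℝ) (_ : τ ≤ t), φ t '' {y : X | EpsChain φ ε τ x y},
            dist z' y < δ y) →
        closure (⋃ (t : ℝ) (_ : τ ≤ t), φ t '' {y : X | EpsChain φ ε τ x y})
          ⊆ {y : X | EpsChain φ ε τ x y}) := by
  refine ⟨isOpen_setOf_epsChain φ ε τ x, ?_, fun δ _ hδle hδε => ?_⟩
  · rintro t ht _ ⟨z, hz, rfl⟩
    exact EpsChain.of_mem_ball (Or.inr hz) ht (Metric.mem_ball_self (hεpos _))
  have near_image : ∀ y : X,
      (∃ z' ∈ ⋃ (t : ℝ) (_ : τ ≤ t), φ t '' {y : X | EpsChain φ ε τ x y}, dist z' y < δ y) →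
        EpsChain φ ε τ x y := by
    rintro y ⟨_, hz', hd⟩
    obtain ⟨t, ht, z, hz, rfl⟩ := by simpa only [Set.mem_iUnion] using hz'
    have hε : ε y / 2 < ε (φ t z) := hδε y _ (by rwa [dist_comm])
    exact EpsChain.of_mem_ball (Or.inr hz) ht
      (Metric.mem_ball'.2 (by linarith [hδle y]))
  exact ⟨near_image, fun hcl y hy => near_image y (hcl y hy)⟩

theorem chain_reachable_set_is_preattractor
    {X : Type*} [MetricSpace X] (φ : ℝ → X → X)
    (hφcont : Continuous fun q : ℝ × X => φ q.1 q.2)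
    (ε : X → ℝ) (hεcont : Continuous ε) (hεpos : ∀ x, 0 < ε x)
    (τ : ℝ) (hτ : 0 < τ) (x : X) :
    IsOpen {y : X | EpsChain φ ε τ x y} ∧
    (∀ t : ℝ, τ ≤ t → φ t '' {y : X | EpsChain φ ε τ x y} ⊆ {y : X | EpsChain φ ε τ x y}) ∧
    ∀ δ : X → ℝ, (∀ y, 0 < δ y) → (∀ y, δ y ≤ ε y / 2) →
      (∀ y w, dist y w < δ y → ε y / 2 < ε w) →
      (∀ y : X,
        (∃ z' ∈ ⋃ (t : ℝ) (_ : τ ≤ t), φ t '' {y : X | EpsChain φ ε τ x y},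
          dist z' y < δ y) → y ∈ {y : X | EpsChain φ ε τ x y}) ∧
      ((∀ y ∈ closure (⋃ (t : ℝ) (_ : τ ≤ t), φ t '' {y : X | EpsChain φ ε τ x y}),
          ∃ z' ∈ ⋃ (t : ℝ) (_ : τ ≤ t), φ t '' {y : X | EpsChain φ ε τ x y},
            dist z' y < δ y) →
        closure (⋃ (t : ℝ) (_ : τ ≤ t), φ t '' {y : X | EpsChain φ ε τ x y})
          ⊆ {y : X | EpsChain φ ε τ x y}) :=
  chain_reachable_set_is_preattractor_general φ ε hεpos τ x
end
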